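/- arXiv:2504.10321 — 3 statements merged into one kernel-verified Lean document; each statement's English description precedes it below -/
import Mathlib

section
/- Let K be a field, let k ≥ 1 and ν ≥ 0 be natural numbers, and let x = (x_0,…,x_ν) and y = (y_0,…,y_ν) be families of elements of K. Then the k × 2(ν+k) block matrix B = [W(x) | W(y)] has rank k if and only if not all of the elements x_0,…,x_ν,y_0,…,y_ν are zero (and B = 0 when they are all zero). -/
/-! If `x_d` is the first nonzero entry of `x`, the `k` consecutive columns of `W(x)` starting
at column `d` form an upper triangular matrix with constant diagonal `x_d`, so `W(x)` has full
row rank; and `W(x)`, `W(y)` are column blocks of `[W(x) | W(y)]`. -/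

/-- The wide Toeplitz band matrix `W(x)`: the `k × (ν+k)` matrix with
`W(x)[i,j] = x (j-i)` when `i ≤ j ≤ i + ν` and `0` otherwise. -/
def Wmat {K : Type*} [Field K] (k ν : ℕ) (x : Fin (ν + 1) → K) :
    Matrix (Fin k) (Fin (ν + k)) K :=
  Matrix.of fun i j =>
    if h : (i : ℕ) ≤ (j : ℕ) ∧ (j : ℕ) ≤ (i : ℕ) + ν then
      x ⟨(j : ℕ) - (i : ℕ), by omega⟩
    else 0

namespace Matrix

variable {m n n' R : Type*} [CommSemiring R] [StrongRankCondition R] [Fintype n] [Fintype n']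

theorem rank_le_rank_fromCols_left (A : Matrix m n R) (B : Matrix m n' R) :
    A.rank ≤ (fromCols A B).rank :=
  rank_submatrix_le (fromCols A B) id Sum.inl

theorem rank_le_rank_fromCols_right (A : Matrix m n R) (B : Matrix m n' R) :
    B.rank ≤ (fromCols A B).rank :=
  rank_submatrix_le (fromCols A B) id Sum.inr

end Matrix

section Wmat

variable {K : Type*} [Field K] (k ν : ℕ)

@[simp]
theorem Wmat_zero : Wmat (K := K) k ν 0 = 0 := by
  ext i j
  simp only [Wmat, Matrix.of_apply]
  split <;> simp

def Wmat.shiftedCols (d : Fin (ν + 1)) (i : Fin k) : Fin (ν + k) :=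
  ⟨i + d, by omega⟩

variable {k ν} {x : Fin (ν + 1) → K} {d : Fin (ν + 1)}

theorem Wmat_submatrix_shiftedCols_isUpperTriangular (hmin : ∀ j < d, x j = 0) :
    ((Wmat k ν x).submatrix id (Wmat.shiftedCols k ν d)).IsUpperTriangular := by
  intro i i' hlt
  simp only [Matrix.submatrix_apply, Wmat, Wmat.shiftedCols, Matrix.of_apply, id_eq]
  split
  · exact hmin _ (Fin.lt_def.mpr (by simp only [id_eq, Fin.lt_def] at hlt ⊢; omega))
  · rfl

theorem Wmat_submatrix_shiftedCols_diag (i : Fin k) :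
    (Wmat k ν x).submatrix id (Wmat.shiftedCols k ν d) i i = x d := by
  have hband : (i : ℕ) ≤ i + d ∧ (i : ℕ) + d ≤ i + ν := ⟨by omega, by omega⟩
  simp only [Matrix.submatrix_apply, Wmat, Wmat.shiftedCols, Matrix.of_apply, id_eq, dif_pos hband]
  congr
  simp

theorem det_Wmat_submatrix_shiftedCols (hmin : ∀ j < d, x j = 0) :
    ((Wmat k ν x).submatrix id (Wmat.shiftedCols k ν d)).det = x d ^ k := by
  rw [Matrix.det_of_isUpperTriangular (Wmat_submatrix_shiftedCols_isUpperTriangular hmin)]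
  simp only [Wmat_submatrix_shiftedCols_diag, Finset.prod_const, Finset.card_univ, Fintype.card_fin]

theorem rank_Wmat (hx : x ≠ 0) : (Wmat k ν x).rank = k := by
  obtain ⟨d, hd, hmin⟩ := wellFounded_lt.has_min {j | x j ≠ 0} (Function.ne_iff.mp hx)
  have hdet : ((Wmat k ν x).submatrix id (Wmat.shiftedCols k ν d)).det ≠ 0 := by
    rw [det_Wmat_submatrix_shiftedCols fun j hj => not_not.mp (hmin j · hj)]
    exact pow_ne_zero k hd
  refine le_antisymm (Matrix.rank_le_height _) ?_
  calc k = ((Wmat k ν x).submatrix id (Wmat.shiftedCols k ν d)).rank := by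
        rw [Matrix.rank_of_det_ne_zero hdet, Fintype.card_fin]
    _ ≤ (Wmat k ν x).rank := Matrix.rank_submatrix_le _ _ _

theorem rank_fromCols_Wmat {y : Fin (ν + 1) → K} (hxy : ¬(x = 0 ∧ y = 0)) :
    (Matrix.fromCols (Wmat k ν x) (Wmat k ν y)).rank = k := by
  refine le_antisymm ((Matrix.rank_le_card_height _).trans_eq (Fintype.card_fin k)) ?_
  rcases not_and_or.mp hxy with hx | hy
  · exact (rank_Wmat hx).ge.trans (Matrix.rank_le_rank_fromCols_left _ _)
  · exact (rank_Wmat hy).ge.trans (Matrix.rank_le_rank_fromCols_right _ _)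

end Wmat

/-- The `k × 2(ν+k)` block matrix `B = [W(x) | W(y)]` has rank `k` if and only
if not all of `x` and `y` vanish; and `B = 0` when they all vanish. -/
theorem stmt4 {K : Type*} [Field K] (k ν : ℕ) (hk : 1 ≤ k)
    (x y : Fin (ν + 1) → K) :
    ((Matrix.fromCols (Wmat k ν x) (Wmat k ν y)).rank = k ↔
        ¬(x = 0 ∧ y = 0)) ∧
      (x = 0 ∧ y = 0 → Matrix.fromCols (Wmat k ν x) (Wmat k ν y) = 0) := by
  have hzero : x = 0 ∧ y = 0 → Matrix.fromCols (Wmat k ν x) (Wmat k ν y) = 0 := by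
    rintro ⟨rfl, rfl⟩
    simp
  refine ⟨⟨fun hrank hxy => ?_, rank_fromCols_Wmat⟩, hzero⟩
  rw [hzero hxy, Matrix.rank_zero] at hrank
  omega
end

section
/- Let K be a field, let k ≥ 1 and ν ≥ 0 be natural numbers, and let x = (x_0,…,x_ν) and y = (y_0,…,y_ν) be families of elements of K. Then the 2(ν+k) × k block matrix A with top block −H(y) and bottom block H(x) has rank k if and only if not all of the elements x_0,…,x_ν,y_0,…,y_ν are zero (and A = 0 when they are all zero). -/
open Matrix

/-- The tall Hankel band matrix `H(x)`: the `(ν+k) × k` matrix with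
`H(x)[j,i] = x (ν+k-1-j-i)` when `k-1 ≤ j+i ≤ ν+k-1` and `0` otherwise. -/
def Hmat {K : Type*} [Field K] (k ν : ℕ) (x : Fin (ν + 1) → K) :
    Matrix (Fin (ν + k)) (Fin k) K :=
  Matrix.of fun j i =>
    if h : k - 1 ≤ (j : ℕ) + (i : ℕ) ∧ (j : ℕ) + (i : ℕ) ≤ ν + k - 1 then
      x ⟨ν + k - 1 - (j : ℕ) - (i : ℕ), by omega⟩
    else 0

lemma Hmat_zero {K : Type*} [Field K] (k ν : ℕ) :
    Hmat k ν (0 : Fin (ν + 1) → K) = 0 := by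
  ext j i
  simp only [Hmat, Matrix.of_apply, Matrix.zero_apply]
  split <;> simp

open Classical in
/-- If `z ≠ 0` then `H(z) *ᵥ v = 0` implies `v = 0`. -/
lemma Hmat_mulVec_eq_zero {K : Type*} [Field K] (k ν : ℕ) (hk : 1 ≤ k)
    (z : Fin (ν + 1) → K) (hz : z ≠ 0) (v : Fin k → K)
    (hv : Hmat k ν z *ᵥ v = 0) : v = 0 := by
  -- find the least index t0 with z t0 ≠ 0
  have hex : ∃ n : ℕ, ∃ h : n < ν + 1, z ⟨n, h⟩ ≠ 0 := by
    by_contra h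
    push_neg at h
    apply hz
    funext t
    exact h t t.isLt
  set t0 := Nat.find hex with ht0def
  obtain ⟨ht0lt, ht0⟩ := Nat.find_spec hex
  have hmin : ∀ n (h : n < ν + 1), n < t0 → z ⟨n, h⟩ = 0 := by
    intro n h hn
    by_contra hne
    exact absurd ⟨h, hne⟩ (Nat.find_min hex hn)
  have ht0ν : t0 ≤ ν := by omega
  -- the row selection
  set r : Fin k → Fin (ν + k) := fun i => ⟨ν + k - 1 - t0 - i, by omega⟩ with hr
  set B : Matrix (Fin k) (Fin k) K := (Hmat k ν z).submatrix r id with hB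
  -- B is lower triangular with nonzero diagonal
  have hupper : ∀ i j : Fin k, (i : ℕ) < (j : ℕ) → B i j = 0 := by
    intro i j hij
    simp only [hB, Matrix.submatrix_apply, id, Hmat, Matrix.of_apply, hr]
    split
    · rename_i hband
      apply hmin
      have hi : (i : ℕ) ≤ k - 1 := by omega
      omega
    · rfl
  have hdiag : ∀ i : Fin k, B i i = z ⟨t0, ht0lt⟩ := by
    intro i
    simp only [hB, Matrix.submatrix_apply, id, Hmat, Matrix.of_apply, hr]
    have hi : (i : ℕ) ≤ k - 1 := by omega
    rw [dif_pos (by omega)]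
    congr 1
    apply Fin.ext
    show ν + k - 1 - (ν + k - 1 - t0 - (i : ℕ)) - (i : ℕ) = t0
    omega
  have hdet : B.det ≠ 0 := by
    rw [Matrix.det_of_lowerTriangular B
      (fun i j h => hupper i j (by simpa using h))]
    refine Finset.prod_ne_zero_iff.mpr fun i _ => ?_
    rw [hdiag i]; exact ht0
  have hunit : IsUnit B := by
    rw [Matrix.isUnit_iff_isUnit_det]
    exact isUnit_iff_ne_zero.mpr hdet
  have hBv : B *ᵥ v = 0 := by
    funext i
    have : (B *ᵥ v) i = (Hmat k ν z *ᵥ v) (r i) := by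
      simp [hB, Matrix.mulVec, dotProduct]
    rw [this, hv]; rfl
  have hinj := Matrix.mulVec_injective_iff_isUnit.mpr hunit
  have : B *ᵥ v = B *ᵥ 0 := by rw [hBv, Matrix.mulVec_zero]
  exact hinj this

/-- The `2(ν+k) × k` block matrix `A = [-H(y); H(x)]` has rank `k` if and only
if not all of `x` and `y` vanish; and `A = 0` when they all vanish. -/
theorem stmt5 {K : Type*} [Field K] (k ν : ℕ) (hk : 1 ≤ k)
    (x y : Fin (ν + 1) → K) :
    ((Matrix.fromRows (-(Hmat k ν y)) (Hmat k ν x)).rank = k ↔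
        ¬(x = 0 ∧ y = 0)) ∧
      (x = 0 ∧ y = 0 → Matrix.fromRows (-(Hmat k ν y)) (Hmat k ν x) = 0) := by
  have hzero : x = 0 ∧ y = 0 → Matrix.fromRows (-(Hmat k ν y)) (Hmat k ν x) = 0 := by
    rintro ⟨hx, hy⟩
    subst hx; subst hy
    simp only [Hmat_zero]
    ext (i | i) j <;> simp
  refine ⟨⟨fun hr hxy => ?_, fun h => ?_⟩, hzero⟩
  · rw [hzero hxy, Matrix.rank_zero] at hr
    omega
  · -- rank = k since mulVecLin is injective
    have hinj : Function.Injective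
        (Matrix.fromRows (-(Hmat k ν y)) (Hmat k ν x)).mulVecLin := by
      rw [injective_iff_map_eq_zero]
      intro v hv
      simp only [Matrix.mulVecLin_apply] at hv
      have hx' : Hmat k ν x *ᵥ v = 0 := by
        funext j
        have := congrFun hv (Sum.inr j)
        rw [Matrix.fromRows_mulVec] at this
        simpa using this
      have hy' : Hmat k ν y *ᵥ v = 0 := by
        have h2 : -(Hmat k ν y) *ᵥ v = 0 := by
          funext j
          have := congrFun hv (Sum.inl j)
          rw [Matrix.fromRows_mulVec] at this
          simpa using this
        rw [Matrix.neg_mulVec, neg_eq_zero] at h2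
        exact h2
      rcases not_and_or.mp h with hx0 | hy0
      · exact Hmat_mulVec_eq_zero k ν hk x hx0 v hx'
      · exact Hmat_mulVec_eq_zero k ν hk y hy0 v hy'
    rw [Matrix.rank, LinearMap.finrank_range_of_inj hinj, Module.finrank_fin_fun]
end

section
/- Let K be a field, let k ≥ 1 and n, m, l ≥ 0 be natural numbers, and let u, v (each indexed 0,…,n), w, x (each indexed 0,…,m), and y, z (each indexed 0,…,l) be families of elements of K. Then the (2(n+k)+2(m+k)+2(l+k)) × k block matrix g whose vertical blocks are T(u), T(v), T(w), T(x), T(y), T(z) in that order has rank k if and only if not all of the elements of u, v, w, x, y, z are zero (and g = 0 when they are all zero). -/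
/-- The tall Toeplitz band matrix `T(u)`: the `(n+k) × k` matrix with
`T(u)[j,i] = u (j-i)` when `i ≤ j ≤ i + n` and `0` otherwise. -/
def Tt {K : Type*} [Field K] (k n : ℕ) (u : Fin (n + 1) → K) :
    Matrix (Fin (n + k)) (Fin k) K :=
  Matrix.of fun j i =>
    if h : (i : ℕ) ≤ (j : ℕ) ∧ (j : ℕ) ≤ (i : ℕ) + n then
      u ⟨(j : ℕ) - (i : ℕ), by omega⟩
    else 0

/-
If `u ≠ 0`, then `T(u)` is injective: `T(u) c` is the coefficient vector of the polynomial product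
`(∑ uₐ tᵃ) (∑ cᵢ tⁱ)`, and if `a` and `i` are the lowest indices with `uₐ ≠ 0` and `cᵢ ≠ 0`, its
coefficient at `i + a` is `uₐ cᵢ ≠ 0`. A block column containing one injective block is injective,
so `g` has rank `k` as soon as one of the six families is nonzero; otherwise `g = 0`.
-/

open Matrix

theorem exists_ne_zero_forall_lt_eq_zero {ι M : Type*} [LinearOrder ι] [WellFoundedLT ι] [Zero M]
    {f : ι → M} (hf : f ≠ 0) : ∃ a, f a ≠ 0 ∧ ∀ b < a, f b = 0 := by
  obtain ⟨a₀, ha₀⟩ := Function.ne_iff.mp hf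
  obtain ⟨a, ha, hmin⟩ := wellFounded_lt.has_min {a | f a ≠ 0} ⟨a₀, ha₀⟩
  exact ⟨a, ha, fun b hb => by_contra fun hfb => hmin b hfb hb⟩

theorem Matrix.rank_eq_card_of_mulVec_injective {m n R : Type*} [Fintype n] [CommRing R]
    [StrongRankCondition R] {A : Matrix m n R} (hA : Function.Injective A.mulVec) :
    A.rank = Fintype.card n := by
  rw [rank, LinearMap.finrank_range_of_inj hA, Module.finrank_fintype_fun_eq_card]

section FromRows

variable {m₁ m₂ n R : Type*} [Fintype n] [Semiring R]

theorem Matrix.fromRows_mulVec_injective_of_left {A : Matrix m₁ n R}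
    (hA : Function.Injective A.mulVec) (B : Matrix m₂ n R) :
    Function.Injective (fromRows A B).mulVec := fun c d h => by
  rw [fromRows_mulVec, fromRows_mulVec, Sum.elim_eq_iff] at h
  exact hA h.1

theorem Matrix.fromRows_mulVec_injective_of_right {B : Matrix m₂ n R}
    (hB : Function.Injective B.mulVec) (A : Matrix m₁ n R) :
    Function.Injective (fromRows A B).mulVec := fun c d h => by
  rw [fromRows_mulVec, fromRows_mulVec, Sum.elim_eq_iff] at h
  exact hB h.2

end FromRows

section Toeplitz

variable {K : Type*} [Field K] {k n : ℕ}

@[simp]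
theorem Tt_zero : Tt k n (0 : Fin (n + 1) → K) = 0 := by
  ext j i
  simp [Tt]

theorem Tt_apply_add (u : Fin (n + 1) → K) (i : Fin k) (a : Fin (n + 1)) :
    Tt k n u ⟨i + a, by omega⟩ i = u a := by
  simp only [Tt, of_apply]
  rw [dif_pos ⟨by omega, by omega⟩]
  congr 1
  ext
  simp

theorem Tt_apply_eq_zero_of_lt {u : Fin (n + 1) → K} {a : Fin (n + 1)}
    (hu : ∀ b < a, u b = 0) {j : Fin (n + k)} {i : Fin k} (hji : (j : ℕ) < i + a) :
    Tt k n u j i = 0 := by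
  simp only [Tt, of_apply]
  split_ifs
  · exact hu _ (Fin.lt_def.mpr (by simp only; omega))
  · rfl

theorem Tt_mulVec_ne_zero {u : Fin (n + 1) → K} (hu : u ≠ 0) {c : Fin k → K} (hc : c ≠ 0) :
    Tt k n u *ᵥ c ≠ 0 := by
  obtain ⟨a, hua, hu_lt⟩ := exists_ne_zero_forall_lt_eq_zero hu
  obtain ⟨i, hci, hc_lt⟩ := exists_ne_zero_forall_lt_eq_zero hc
  have lowest_coeff : (Tt k n u *ᵥ c) ⟨i + a, by omega⟩ = u a * c i := by
    rw [mulVec, dotProduct, Finset.sum_eq_single i, Tt_apply_add]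
    · intro i' _ hi'
      rcases hi'.lt_or_gt with hlt | hgt
      · rw [hc_lt i' hlt, mul_zero]
      · rw [Tt_apply_eq_zero_of_lt hu_lt (by simp only; omega), zero_mul]
    · simp
  intro h
  exact mul_ne_zero hua hci (lowest_coeff ▸ congrFun h _)

theorem Tt_mulVec_injective {u : Fin (n + 1) → K} (hu : u ≠ 0) :
    Function.Injective (Tt k n u).mulVec := fun c d h => by
  by_contra hcd
  exact Tt_mulVec_ne_zero hu (sub_ne_zero.mpr hcd) (by rw [mulVec_sub, h, sub_self])

end Toeplitz

/-- The block matrix `g = [T(u); T(v); T(w); T(x); T(y); T(z)]` has rank `k`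
if and only if not all of `u, v, w, x, y, z` vanish; and `g = 0` when they all
vanish. -/
theorem stmt9 {K : Type*} [Field K] (k n m l : ℕ) (hk : 1 ≤ k)
    (u v : Fin (n + 1) → K) (w x : Fin (m + 1) → K) (y z : Fin (l + 1) → K) :
    ((Matrix.fromRows (Matrix.fromRows (Tt k n u) (Tt k n v))
          (Matrix.fromRows (Matrix.fromRows (Tt k m w) (Tt k m x))
            (Matrix.fromRows (Tt k l y) (Tt k l z)))).rank = k ↔
        ¬(u = 0 ∧ v = 0 ∧ w = 0 ∧ x = 0 ∧ y = 0 ∧ z = 0)) ∧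
      (u = 0 ∧ v = 0 ∧ w = 0 ∧ x = 0 ∧ y = 0 ∧ z = 0 →
        Matrix.fromRows (Matrix.fromRows (Tt k n u) (Tt k n v))
          (Matrix.fromRows (Matrix.fromRows (Tt k m w) (Tt k m x))
            (Matrix.fromRows (Tt k l y) (Tt k l z))) = 0) := by
  have g_eq_zero : u = 0 ∧ v = 0 ∧ w = 0 ∧ x = 0 ∧ y = 0 ∧ z = 0 →
      fromRows (fromRows (Tt k n u) (Tt k n v))
        (fromRows (fromRows (Tt k m w) (Tt k m x)) (fromRows (Tt k l y) (Tt k l z))) = 0 := by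
    rintro ⟨rfl, rfl, rfl, rfl, rfl, rfl⟩
    simp only [Tt_zero, fromRows_zero]
  refine ⟨⟨fun hrank hall => ?_, fun hall => ?_⟩, g_eq_zero⟩
  · rw [g_eq_zero hall, rank_zero] at hrank
    omega
  · rw [rank_eq_card_of_mulVec_injective, Fintype.card_fin]
    have some_ne_zero : u ≠ 0 ∨ v ≠ 0 ∨ w ≠ 0 ∨ x ≠ 0 ∨ y ≠ 0 ∨ z ≠ 0 := by tauto
    rcases some_ne_zero with h | h | h | h | h | h
    · exact fromRows_mulVec_injective_of_left
        (fromRows_mulVec_injective_of_left (Tt_mulVec_injective h) _) _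
    · exact fromRows_mulVec_injective_of_left
        (fromRows_mulVec_injective_of_right (Tt_mulVec_injective h) _) _
    · exact fromRows_mulVec_injective_of_right (fromRows_mulVec_injective_of_left
        (fromRows_mulVec_injective_of_left (Tt_mulVec_injective h) _) _) _
    · exact fromRows_mulVec_injective_of_right (fromRows_mulVec_injective_of_left
        (fromRows_mulVec_injective_of_right (Tt_mulVec_injective h) _) _) _
    · exact fromRows_mulVec_injective_of_right (fromRows_mulVec_injective_of_right
        (fromRows_mulVec_injective_of_left (Tt_mulVec_injective h) _) _) _
    · exact fromRows_mulVec_injective_of_right (fromRows_mulVec_injective_of_right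
        (fromRows_mulVec_injective_of_right (Tt_mulVec_injective h) _) _) _
end
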